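/- Let n, a, b be positive integers with a + b < n and b > n/2, and let i = 2b−n+1. Then bar F_i(n,a,b) is a maximal independent set of Γ(n,{a,b}), it is the unique maximal independent set of Γ(n,{a,b}) containing F_i(n,a,b), and |bar F_i(n,a,b) ∖ F_i(n,a,b)| = C(n−i−1, b−i−1) · C(b−i, a), where C(·,·) denotes the binomial coefficient. -/

import Mathlib

open Finset

/-- `Iv n` is the set `[n] = {1, …, n}` as a finset of naturals (with `Iv 0 = ∅`). -/
def Iv (n : ℕ) : Finset ℕ := Finset.Icc 1 n

/-- `f` is a flag of the ground set `[n]`: a set of nonempty proper subsets of `[n]`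
that is totally ordered by inclusion. -/
def IsFlag (n : ℕ) (f : Finset (Finset ℕ)) : Prop :=
  (∀ A ∈ f, A.Nonempty ∧ A ⊆ Iv n ∧ A ≠ Iv n) ∧
  ∀ A ∈ f, ∀ B ∈ f, A ⊆ B ∨ B ⊆ A

/-- The type of a flag: the set of cardinalities of its members. -/
def flagType (f : Finset (Finset ℕ)) : Finset ℕ := f.image Finset.card

/-- The vertices of `Γ(n, T)`: flags of `[n]` of type `T`. -/
def FlagV (n : ℕ) (T : Finset ℕ) : Type :=
  {f : Finset (Finset ℕ) // IsFlag n f ∧ flagType f = T}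

/-- Two flags of `[n]` are in general position. -/
def GenPos (n : ℕ) (f g : Finset (Finset ℕ)) : Prop :=
  ∀ A ∈ f, ∀ B ∈ g, A ∩ B = ∅ ∨ A ∪ B = Iv n

/-- The graph `Γ(n, T)` on the flags of `[n]` of type `T`, two distinct flags being
adjacent iff they are in general position. -/
def flagGraph (n : ℕ) (T : Finset ℕ) : SimpleGraph (FlagV n T) where
  Adj f g := f ≠ g ∧ GenPos n f.1 g.1
  symm := ⟨by
    rintro f g ⟨hne, h⟩
    refine ⟨hne.symm, fun A hA B hB => ?_⟩
    rcases h B hB A hA with h' | h'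
    · exact Or.inl (by rwa [Finset.inter_comm])
    · exact Or.inr (by rwa [Finset.union_comm])⟩
  loopless := ⟨fun f h => h.1 rfl⟩

/-- A set of vertices is independent: pairwise nonadjacent. -/
def IsIndep {V : Type*} (G : SimpleGraph V) (s : Set V) : Prop :=
  ∀ ⦃u⦄, u ∈ s → ∀ ⦃v⦄, v ∈ s → ¬ G.Adj u v

/-- A maximal independent set: independent, and no vertex can be added to it
keeping it independent. -/
def IsMaxIndep {V : Type*} (G : SimpleGraph V) (s : Set V) : Prop :=
  IsIndep G s ∧ ∀ v ∉ s, ¬ IsIndep G (insert v s)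

/-- The independence number of a graph: the largest cardinality of an independent set. -/
noncomputable def indepNum {V : Type*} (G : SimpleGraph V) : ℕ :=
  sSup {k | ∃ s : Set V, IsIndep G s ∧ s.ncard = k}

/-- Two sets of vertices are equivalent when some automorphism of the graph maps
one onto the other. -/
def EquivIndep {V : Type*} (G : SimpleGraph V) (s t : Set V) : Prop :=
  ∃ φ : G ≃g G, ⇑φ '' s = t

/-- The projection of a flag to the sub-type `S`: keep only the members whose
cardinality lies in `S`. -/
def projFlag (S : Finset ℕ) (f : Finset (Finset ℕ)) : Finset (Finset ℕ) :=
  f.filter (fun A => A.card ∈ S)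

/-- Condition (I) of Example 3.1: `[i] ⊆ B ⊆ [n-1]`. -/
def condI (n i : ℕ) (B : Finset ℕ) : Prop := Iv i ⊆ B ∧ B ⊆ Iv (n - 1)

/-- Condition (II) of Example 3.1: `min A ≤ i` and `[min A] ⊆ B`. -/
def condII (i : ℕ) (A B : Finset ℕ) : Prop :=
  ∃ j ∈ A, (∀ k ∈ A, j ≤ k) ∧ j ≤ i ∧ Iv j ⊆ B

/-- The set `F_i(n,a,b)` of flags `(A,B)` of `[n]` of type `{a,b}` satisfying
condition (I) or condition (II). -/
def Fi (n a b i : ℕ) : Set (FlagV n {a, b}) :=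
  {f | ∃ A B : Finset ℕ, A ∈ f.1 ∧ B ∈ f.1 ∧ A.card = a ∧ B.card = b ∧
        (condI n i B ∨ condII i A B)}

/-- The set `bar F_i(n,a,b)` for `i = 2b-n+1`: flags `(A,B)` of type `{a,b}` with
`[i] ⊆ B` or condition (II). -/
def FiBar (n a b : ℕ) : Set (FlagV n {a, b}) :=
  {f | ∃ A B : Finset ℕ, A ∈ f.1 ∧ B ∈ f.1 ∧ A.card = a ∧ B.card = b ∧
        (Iv (2 * b - n + 1) ⊆ B ∨ condII (2 * b - n + 1) A B)}

/-- The rational number `i₀ = b - 1 - (n-b)(n-b-1)/a`. -/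
def izero (n a b : ℕ) : ℚ :=
  (b : ℚ) - 1 - ((n : ℚ) - b) * ((n : ℚ) - b - 1) / a

/-- The index `i = max{0, ⌈i₀⌉}`. -/
def iDef (n a b : ℕ) : ℕ := (max 0 ⌈izero n a b⌉).toNat

/-- `f(n,a,b)`: the largest cardinality of the sets `F_j(n,a,b)`, `0 ≤ j ≤ 2b-n+1`. -/
noncomputable def fMax (n a b : ℕ) : ℕ :=
  (Finset.range (2 * b - n + 2)).sup (fun j => (Fi n a b j).ncard)

/-- An independent set of `Γ(n,{a,b})` is of standard type if it has cardinality
`f(n,a,b)` and some automorphism of the graph maps it onto one of the sets of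
Example 3.1. -/
noncomputable def IsStandardType (n a b : ℕ) (F : Set (FlagV n {a, b})) : Prop :=
  F.ncard = fMax n a b ∧
  ∃ φ : flagGraph n {a, b} ≃g flagGraph n {a, b},
    (∃ j ≤ 2 * b - n + 1, ⇑φ '' F = Fi n a b j) ∨ ⇑φ '' F = FiBar n a b

lemma Iv_card (n : ℕ) : (Iv n).card = n := by simp [Iv]

lemma mem_Iv {n x : ℕ} : x ∈ Iv n ↔ 1 ≤ x ∧ x ≤ n := by simp [Iv]

lemma Iv_subset_Iv {m n : ℕ} (h : m ≤ n) : Iv m ⊆ Iv n := by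
  intro x hx; rw [mem_Iv] at *; omega

/-- Extract the canonical pair from a flag of type `{a,b}`. -/
lemma flag_pair {n a b : ℕ} (hab : a < b) (v : FlagV n {a, b}) :
    ∃ A B : Finset ℕ, v.1 = {A, B} ∧ A ⊆ B ∧ A.card = a ∧ B.card = b ∧
      B ⊆ Iv n ∧ B ≠ Iv n ∧ A.Nonempty := by
  obtain ⟨⟨hmem, hchain⟩, htype⟩ := v.2
  have ha' : a ∈ flagType v.1 := by rw [htype]; simp
  have hb' : b ∈ flagType v.1 := by rw [htype]; simp
  rw [flagType, Finset.mem_image] at ha' hb'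
  obtain ⟨A, hA, hAc⟩ := ha'
  obtain ⟨B, hB, hBc⟩ := hb'
  have hAB : A ⊆ B := by
    rcases hchain A hA B hB with h | h
    · exact h
    · exact absurd (Finset.card_le_card h) (by omega)
  refine ⟨A, B, ?_, hAB, hAc, hBc, (hmem B hB).2.1, (hmem B hB).2.2, ?_⟩
  · ext C
    simp only [Finset.mem_insert, Finset.mem_singleton]
    constructor
    · intro hC
      have : C.card ∈ flagType v.1 := Finset.mem_image_of_mem _ hC
      rw [htype] at this
      simp only [Finset.mem_insert, Finset.mem_singleton] at this
      rcases this with h | h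
      · left
        rcases hchain C hC A hA with h' | h' <;>
          [exact Finset.eq_of_subset_of_card_le h' (by omega);
           exact (Finset.eq_of_subset_of_card_le h' (by omega)).symm]
      · right
        rcases hchain C hC B hB with h' | h' <;>
          [exact Finset.eq_of_subset_of_card_le h' (by omega);
           exact (Finset.eq_of_subset_of_card_le h' (by omega)).symm]
    · rintro (rfl | rfl) <;> assumption
  · exact (hmem A hA).1

/-- Uniqueness of the member of given cardinality. -/
lemma flag_mem_eq {a b : ℕ} (hab : a < b) {A B C : Finset ℕ}
    (hC : C ∈ ({A, B} : Finset (Finset ℕ))) (hAc : A.card = a) (hBc : B.card = b) :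
    (C.card = a → C = A) ∧ (C.card = b → C = B) := by
  simp only [Finset.mem_insert, Finset.mem_singleton] at hC
  rcases hC with rfl | rfl
  · exact ⟨fun _ => rfl, fun h => absurd (hAc ▸ h) (by omega)⟩
  · exact ⟨fun h => absurd (hBc ▸ h) (by omega), fun _ => rfl⟩

/-- Membership in `FiBar` in terms of the canonical pair. -/
lemma mem_FiBar_iff {n a b : ℕ} (hab : a < b) {v : FlagV n {a, b}} {A B : Finset ℕ}
    (hv : v.1 = {A, B}) (hAc : A.card = a) (hBc : B.card = b) :
    v ∈ FiBar n a b ↔ (Iv (2 * b - n + 1) ⊆ B ∨ condII (2 * b - n + 1) A B) := by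
  constructor
  · rintro ⟨A', B', hA', hB', hA'c, hB'c, h⟩
    rw [hv] at hA' hB'
    have e1 := (flag_mem_eq hab hA' hAc hBc).1 hA'c
    have e2 := (flag_mem_eq hab hB' hAc hBc).2 hB'c
    subst e1; subst e2; exact h
  · intro h
    exact ⟨A, B, by rw [hv]; simp, by rw [hv]; simp, hAc, hBc, h⟩

/-- Membership in `Fi` in terms of the canonical pair. -/
lemma mem_Fi_iff {n a b i : ℕ} (hab : a < b) {v : FlagV n {a, b}} {A B : Finset ℕ}
    (hv : v.1 = {A, B}) (hAc : A.card = a) (hBc : B.card = b) :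
    v ∈ Fi n a b i ↔ (condI n i B ∨ condII i A B) := by
  constructor
  · rintro ⟨A', B', hA', hB', hA'c, hB'c, h⟩
    rw [hv] at hA' hB'
    have e1 := (flag_mem_eq hab hA' hAc hBc).1 hA'c
    have e2 := (flag_mem_eq hab hB' hAc hBc).2 hB'c
    subst e1; subst e2; exact h
  · intro h
    exact ⟨A, B, by rw [hv]; simp, by rw [hv]; simp, hAc, hBc, h⟩
/-- Build a flag of type `{a,b}` from a nested pair. -/
lemma mk_flag {n a b : ℕ} {A B : Finset ℕ} (ha : 0 < a) (hab : a < b) (hbn : b < n)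
    (hAB : A ⊆ B) (hBn : B ⊆ Iv n) (hAc : A.card = a) (hBc : B.card = b) :
    IsFlag n {A, B} ∧ flagType {A, B} = {a, b} := by
  have hAn : A ⊆ Iv n := hAB.trans hBn
  have hIvc := Iv_card n
  constructor
  · constructor
    · intro C hC
      simp only [Finset.mem_insert, Finset.mem_singleton] at hC
      rcases hC with rfl | rfl
      · exact ⟨Finset.card_pos.mp (by omega), hAn, fun h => by rw [h] at hAc; omega⟩
      · exact ⟨Finset.card_pos.mp (by omega), hBn, fun h => by rw [h] at hBc; omega⟩
    · intro C hC D hD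
      simp only [Finset.mem_insert, Finset.mem_singleton] at hC hD
      rcases hC with rfl | rfl <;> rcases hD with rfl | rfl <;>
        simp [hAB, Finset.Subset.refl]
  · rw [flagType]
    rw [Finset.image_insert, Finset.image_singleton, hAc, hBc]

lemma card_lt_of_subset_ne {n : ℕ} {B : Finset ℕ} (hBn : B ⊆ Iv n) : B.card ≤ n := by
  have := Finset.card_le_card hBn
  rwa [Iv_card] at this

/-- Adjacency in `Γ(n,{a,b})` in terms of canonical pairs, when `a + b < n < 2b`. -/
lemma adj_iff {n a b : ℕ} (hab : a + b < n) (hbn : n < 2 * b)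
    {v w : FlagV n {a, b}} {A B A' B' : Finset ℕ}
    (hv : v.1 = {A, B}) (hw : w.1 = {A', B'})
    (hAB : A ⊆ B) (hAB' : A' ⊆ B') (hBn : B ⊆ Iv n) (hBn' : B' ⊆ Iv n)
    (hAc : A.card = a) (hBc : B.card = b) (hA'c : A'.card = a) (hB'c : B'.card = b) :
    (flagGraph n {a, b}).Adj v w ↔
      v ≠ w ∧ A ∩ B' = ∅ ∧ A' ∩ B = ∅ ∧ B ∪ B' = Iv n := by
  have hIvc := Iv_card n
  constructor
  · intro hadj
    obtain ⟨hne, hgp⟩ := (hadj : v ≠ w ∧ GenPos n v.1 w.1)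
    rw [hv, hw] at hgp
    have h1 : A ∩ B' = ∅ := by
      rcases hgp A (by simp) B' (by simp) with h | h
      · exact h
      · exfalso
        have := Finset.card_union_le A B'
        rw [h, hIvc] at this; omega
    have h2 : A' ∩ B = ∅ := by
      rcases hgp B (by simp) A' (by simp) with h | h
      · rwa [Finset.inter_comm] at h
      · exfalso
        have := Finset.card_union_le B A'
        rw [h, hIvc] at this; omega
    have h3 : B ∪ B' = Iv n := by
      rcases hgp B (by simp) B' (by simp) with h | h
      · exfalso
        have hc := Finset.card_inter_add_card_union B B'
        rw [h] at hc
        have hsub : B ∪ B' ⊆ Iv n := Finset.union_subset hBn hBn'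
        have := card_lt_of_subset_ne hsub
        simp at hc; omega
      · exact h
    exact ⟨hne, h1, h2, h3⟩
  · rintro ⟨hne, h1, h2, h3⟩
    refine (⟨hne, ?_⟩ : v ≠ w ∧ GenPos n v.1 w.1)
    rw [hv, hw]
    intro C hC D hD
    simp only [Finset.mem_insert, Finset.mem_singleton] at hC hD
    rcases hC with rfl | rfl <;> rcases hD with rfl | rfl
    · left
      have : C ∩ D ⊆ C ∩ B' := Finset.inter_subset_inter le_rfl hAB'
      rw [h1] at this
      exact Finset.subset_empty.mp this
    · exact Or.inl h1
    · left; rwa [Finset.inter_comm]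
    · exact Or.inr h3
/-- `FiBar` is an independent set. -/
lemma FiBar_indep {n a b : ℕ} (ha : 0 < a) (hb : 0 < b) (hab : a + b < n)
    (hbn : n < 2 * b) : IsIndep (flagGraph n {a, b}) (FiBar n a b) := by
  have hab' : a < b := by omega
  intro v hv w hw hadj
  obtain ⟨A, B, hveq, hAB, hAc, hBc, hBn, hBne, hAne⟩ := flag_pair hab' v
  obtain ⟨A', B', hweq, hAB', hA'c, hB'c, hBn', hB'ne, hA'ne⟩ := flag_pair hab' w
  rw [adj_iff hab hbn hveq hweq hAB hAB' hBn hBn' hAc hBc hA'c hB'c] at hadj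
  obtain ⟨hne, h1, h2, h3⟩ := hadj
  -- |B ∩ B'| = 2b - n = i - 1
  have hcap : (B ∩ B').card = 2 * b - n := by
    have hc := Finset.card_inter_add_card_union B B'
    rw [h3, Iv_card] at hc; omega
  rw [mem_FiBar_iff hab' hveq hAc hBc] at hv
  rw [mem_FiBar_iff hab' hweq hA'c hB'c] at hw
  set i := 2 * b - n + 1 with hi
  rcases hv with hv | hv <;> rcases hw with hw | hw
  · have : Iv i ⊆ B ∩ B' := Finset.subset_inter hv hw
    have := Finset.card_le_card this
    rw [Iv_card] at this; omega
  · obtain ⟨j, hjA', hjmin, hji, hjB'⟩ := hw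
    have hj1 : 1 ≤ j := by
      have := (mem_Iv.mp ((hAB'.trans hBn') hjA')).1; omega
    have : j ∈ B := hv (mem_Iv.mpr ⟨hj1, hji⟩)
    have : j ∈ A' ∩ B := Finset.mem_inter.mpr ⟨hjA', this⟩
    rw [h2] at this; exact absurd this (Finset.notMem_empty j)
  · obtain ⟨j, hjA, hjmin, hji, hjB⟩ := hv
    have hj1 : 1 ≤ j := by
      have := (mem_Iv.mp ((hAB.trans hBn) hjA)).1; omega
    have : j ∈ B' := hw (mem_Iv.mpr ⟨hj1, hji⟩)
    have : j ∈ A ∩ B' := Finset.mem_inter.mpr ⟨hjA, this⟩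
    rw [h1] at this; exact absurd this (Finset.notMem_empty j)
  · obtain ⟨j, hjA, hjmin, hji, hjB⟩ := hv
    obtain ⟨j', hjA', hjmin', hji', hjB'⟩ := hw
    have hj1 : 1 ≤ j := by
      have := (mem_Iv.mp ((hAB.trans hBn) hjA)).1; omega
    have hj1' : 1 ≤ j' := by
      have := (mem_Iv.mp ((hAB'.trans hBn') hjA')).1; omega
    rcases le_total j j' with h | h
    · have : j ∈ B' := hjB' (mem_Iv.mpr ⟨hj1, h⟩)
      have : j ∈ A ∩ B' := Finset.mem_inter.mpr ⟨hjA, this⟩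
      rw [h1] at this; exact absurd this (Finset.notMem_empty j)
    · have : j' ∈ B := hjB (mem_Iv.mpr ⟨hj1', h⟩)
      have : j' ∈ A' ∩ B := Finset.mem_inter.mpr ⟨hjA', this⟩
      rw [h2] at this; exact absurd this (Finset.notMem_empty j')
/-- Every flag not in `FiBar` is adjacent to some flag in `Fi (2b-n+1)`. -/
lemma exists_adj_Fi {n a b : ℕ} (ha : 0 < a) (hb : 0 < b) (hab : a + b < n)
    (hbn : n < 2 * b) {v : FlagV n {a, b}} (hv : v ∉ FiBar n a b) :
    ∃ w : FlagV n {a, b}, w ∈ Fi n a b (2 * b - n + 1) ∧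
      (flagGraph n {a, b}).Adj v w := by
  have hab' : a < b := by omega
  have hbln : b < n := by omega
  set i := 2 * b - n + 1 with hi
  obtain ⟨A, B, hveq, hAB, hAc, hBc, hBn, hBne, hAne⟩ := flag_pair hab' v
  rw [mem_FiBar_iff hab' hveq hAc hBc] at hv
  push_neg at hv
  obtain ⟨hIvB, hNII⟩ := hv
  -- k = least element of Iv i \ B
  have hne : (Iv i \ B).Nonempty := by
    by_contra h
    rw [Finset.not_nonempty_iff_eq_empty, Finset.sdiff_eq_empty_iff_subset] at h
    exact hIvB h
  set k := (Iv i \ B).min' hne with hk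
  have hkmem : k ∈ Iv i \ B := Finset.min'_mem _ hne
  have hkIv : k ∈ Iv i := (Finset.mem_sdiff.mp hkmem).1
  have hkB : k ∉ B := (Finset.mem_sdiff.mp hkmem).2
  have hk1 : 1 ≤ k := (mem_Iv.mp hkIv).1
  have hki : k ≤ i := (mem_Iv.mp hkIv).2
  -- Iv (k-1) ⊆ B
  have hIvk1B : Iv (k - 1) ⊆ B := by
    intro x hx
    obtain ⟨hx1, hx2⟩ := mem_Iv.mp hx
    by_contra hxB
    have : x ∈ Iv i \ B := Finset.mem_sdiff.mpr ⟨mem_Iv.mpr ⟨hx1, by omega⟩, hxB⟩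
    have := Finset.min'_le _ _ this
    omega
  -- Iv (k-1) ∩ A = ∅
  have hIvk1A : ∀ x ∈ Iv (k - 1), x ∉ A := by
    intro x hx hxA
    obtain ⟨hx1, hx2⟩ := mem_Iv.mp hx
    apply hNII
    refine ⟨A.min' hAne, A.min'_mem hAne, fun m hm => A.min'_le m hm, ?_, ?_⟩
    · have := A.min'_le x hxA; omega
    · intro y hy
      obtain ⟨hy1, hy2⟩ := mem_Iv.mp hy
      apply hIvk1B
      have := A.min'_le x hxA
      exact mem_Iv.mpr ⟨hy1, by omega⟩
  -- choose X with Iv (k-1) ⊆ X ⊆ B \ A, |X| = i - 1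
  have hIvk1BA : Iv (k - 1) ⊆ B \ A := fun x hx =>
    Finset.mem_sdiff.mpr ⟨hIvk1B hx, hIvk1A x hx⟩
  have hBAcard : (B \ A).card = b - a := by
    rw [Finset.card_sdiff_of_subset hAB, hAc, hBc]
  obtain ⟨X, hX1, hX2, hXcard⟩ := Finset.exists_subsuperset_card_eq hIvk1BA
    (n := (i - 1) - (k - 1) + (Iv (k - 1)).card) (by omega) (by rw [Iv_card, hBAcard]; omega)
  rw [Iv_card] at hXcard
  have hXc : X.card = i - 1 := by omega
  -- B' = (Iv n \ B) ∪ X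
  set B' := (Iv n \ B) ∪ X with hB'
  have hXB : X ⊆ B := hX2.trans (Finset.sdiff_subset)
  have hXA : ∀ x ∈ X, x ∉ A := fun x hx => (Finset.mem_sdiff.mp (hX2 hx)).2
  have hdisj : Disjoint (Iv n \ B) X := by
    rw [Finset.disjoint_left]
    intro x hx hxX
    exact (Finset.mem_sdiff.mp hx).2 (hXB hxX)
  have hB'card : B'.card = b := by
    rw [hB', Finset.card_union_of_disjoint hdisj, Finset.card_sdiff_of_subset hBn, Iv_card,
      hBc, hXc]
    omega
  have hB'n : B' ⊆ Iv n := Finset.union_subset Finset.sdiff_subset (hXB.trans hBn)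
  -- k ∈ Iv n \ B
  have hknB : k ∈ Iv n \ B := by
    refine Finset.mem_sdiff.mpr ⟨mem_Iv.mpr ⟨hk1, by omega⟩, hkB⟩
  -- choose A' ⊆ Iv n \ B with k ∈ A', |A'| = a
  have hnBcard : (Iv n \ B).card = n - b := by
    rw [Finset.card_sdiff_of_subset hBn, Iv_card, hBc]
  obtain ⟨A', hA'1, hA'2, hA'card⟩ := Finset.exists_subsuperset_card_eq (Finset.singleton_subset_iff.mpr hknB)
    (n := a - 1 + ({k} : Finset ℕ).card) (by omega)
    (by rw [Finset.card_singleton, hnBcard]; omega)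
  rw [Finset.card_singleton] at hA'card
  have hA'c : A'.card = a := by omega
  have hkA' : k ∈ A' := hA'1 (Finset.mem_singleton_self k)
  have hA'B' : A' ⊆ B' := fun x hx => Finset.mem_union_left _ (hA'2 hx)
  -- all elements of Iv n \ B are ≥ k
  have hmin : ∀ m ∈ Iv n \ B, k ≤ m := by
    intro m hm
    obtain ⟨hmIv, hmB⟩ := Finset.mem_sdiff.mp hm
    by_contra h
    push_neg at h
    exact hmB (hIvk1B (mem_Iv.mpr ⟨(mem_Iv.mp hmIv).1, by omega⟩))
  -- the flag w
  obtain ⟨hwflag, hwtype⟩ := mk_flag ha hab' hbln hA'B' hB'n hA'c hB'card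
  refine ⟨(⟨{A', B'}, hwflag, hwtype⟩ : FlagV n {a, b}), ?_, ?_⟩
  · apply (mem_Fi_iff hab' (v := ⟨{A', B'}, hwflag, hwtype⟩) rfl hA'c hB'card).mpr
    right
    refine ⟨k, hkA', fun m hm => hmin m (hA'2 hm), hki, ?_⟩
    intro x hx
    obtain ⟨hx1, hx2⟩ := mem_Iv.mp hx
    rcases Nat.lt_or_ge x k with h | h
    · exact Finset.mem_union_right _ (hX1 (mem_Iv.mpr ⟨hx1, by omega⟩))
    · have : x = k := by omega
      subst this
      exact Finset.mem_union_left _ hknB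
  · apply (adj_iff hab hbn hveq (w := ⟨{A', B'}, hwflag, hwtype⟩) rfl hAB hA'B' hBn hB'n hAc hBc hA'c hB'card).mpr
    refine ⟨?_, ?_, ?_, ?_⟩
    · intro h
      have : B ∈ ({A', B'} : Finset (Finset ℕ)) := by
        rw [← show (⟨{A', B'}, hwflag, hwtype⟩ : FlagV n {a,b}).1 = {A', B'} from rfl,
          ← h, hveq]; simp
      have hBeq := (flag_mem_eq hab' this hA'c hB'card).2 hBc
      have : k ∈ B := by
        rw [hBeq]; exact Finset.mem_union_left _ hknB
      exact hkB this
    · rw [Finset.eq_empty_iff_forall_notMem]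
      intro x hx
      obtain ⟨hxA, hxB'⟩ := Finset.mem_inter.mp hx
      rcases Finset.mem_union.mp hxB' with h | h
      · exact (Finset.mem_sdiff.mp h).2 (hAB hxA)
      · exact hXA x h hxA
    · rw [Finset.eq_empty_iff_forall_notMem]
      intro x hx
      obtain ⟨hxA', hxB⟩ := Finset.mem_inter.mp hx
      exact (Finset.mem_sdiff.mp (hA'2 hxA')).2 hxB
    · apply Finset.Subset.antisymm
      · exact Finset.union_subset hBn hB'n
      · intro x hx
        by_cases h : x ∈ B
        · exact Finset.mem_union_left _ h
        · exact Finset.mem_union_right _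
            (Finset.mem_union_left _ (Finset.mem_sdiff.mpr ⟨hx, h⟩))
/-- Characterization of `FiBar \ Fi` in terms of the canonical pair. -/
lemma mem_diff_iff {n a b : ℕ} (ha : 0 < a) (hb : 0 < b) (hab : a + b < n)
    (hbn : n < 2 * b) {v : FlagV n {a, b}} {A B : Finset ℕ}
    (hveq : v.1 = {A, B}) (hAB : A ⊆ B) (hAc : A.card = a) (hBc : B.card = b)
    (hBn : B ⊆ Iv n) (hAne : A.Nonempty) :
    v ∈ FiBar n a b \ Fi n a b (2 * b - n + 1) ↔
      (Iv (2 * b - n + 1) ⊆ B ∧ n ∈ B ∧ ∀ x ∈ A, 2 * b - n + 1 < x) := by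
  have hab' : a < b := by omega
  set i := 2 * b - n + 1 with hi
  rw [Set.mem_diff, mem_FiBar_iff hab' hveq hAc hBc, mem_Fi_iff hab' hveq hAc hBc]
  constructor
  · rintro ⟨h1, h2⟩
    push_neg at h2
    obtain ⟨hnI, hnII⟩ := h2
    have hIvB : Iv i ⊆ B := by
      rcases h1 with h | h
      · exact h
      · exact absurd h hnII
    have hnB : n ∈ B := by
      rw [condI] at hnI
      push_neg at hnI
      obtain ⟨x, hxB, hxn⟩ := Finset.not_subset.mp (hnI hIvB)
      have := mem_Iv.mp (hBn hxB)
      rw [mem_Iv] at hxn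
      have : x = n := by omega
      exact this ▸ hxB
    refine ⟨hIvB, hnB, ?_⟩
    intro x hxA
    by_contra h
    push_neg at h
    apply hnII
    refine ⟨A.min' hAne, A.min'_mem hAne, fun m hm => A.min'_le m hm, ?_, ?_⟩
    · have := A.min'_le x hxA; omega
    · intro y hy
      obtain ⟨hy1, hy2⟩ := mem_Iv.mp hy
      have := A.min'_le x hxA
      exact hIvB (mem_Iv.mpr ⟨hy1, by omega⟩)
  · rintro ⟨h1, h2, h3⟩
    have hnII : ¬ condII i A B := by
      rintro ⟨j, hjA, _, hji, _⟩
      exact absurd hji (by have := h3 j hjA; omega)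
    refine ⟨Or.inl h1, ?_⟩
    rintro (hI | hII)
    · have := hI.2 h2
      rw [mem_Iv] at this
      omega
    · exact hnII hII

/-- The element of a flag of given cardinality, as a function. -/
noncomputable def elC (c : ℕ) (f : Finset (Finset ℕ)) : Finset ℕ :=
  (f.filter (fun C => C.card = c)).sup id

lemma filter_pair_eq {a b : ℕ} {A B : Finset ℕ} (hAc : A.card = a) (hBc : B.card = b)
    (hab : a ≠ b) :
    Finset.filter (fun C => C.card = a) ({A, B} : Finset (Finset ℕ)) = {A} := by
  ext C
  simp only [Finset.mem_filter, Finset.mem_insert, Finset.mem_singleton]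
  constructor
  · rintro ⟨rfl | rfl, h⟩
    · rfl
    · exact absurd (hBc ▸ h) (Ne.symm hab)
  · rintro rfl; exact ⟨Or.inl rfl, hAc⟩

lemma elC_eq_A {a b : ℕ} {A B : Finset ℕ} (hAc : A.card = a) (hBc : B.card = b)
    (hab : a ≠ b) : elC a ({A, B} : Finset (Finset ℕ)) = A := by
  rw [elC, filter_pair_eq hAc hBc hab, Finset.sup_singleton, id]

lemma elC_eq_B {a b : ℕ} {A B : Finset ℕ} (hAc : A.card = a) (hBc : B.card = b)
    (hab : a ≠ b) : elC b ({A, B} : Finset (Finset ℕ)) = B := by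
  have : ({A, B} : Finset (Finset ℕ)) = {B, A} := by
    ext C; simp [or_comm]
  rw [this, elC, filter_pair_eq hBc hAc (Ne.symm hab), Finset.sup_singleton, id]
/-- Counting `b`-subsets of `U` containing a fixed set `D`. -/
lemma card_filter_superset {U D : Finset ℕ} {b : ℕ} (hD : D ⊆ U) (hb : D.card ≤ b) :
    ((U.powersetCard b).filter (fun B => D ⊆ B)).card =
      (U.card - D.card).choose (b - D.card) := by
  have key : ((U.powersetCard b).filter (fun B => D ⊆ B)).card =
      ((U \ D).powersetCard (b - D.card)).card := by
    apply Finset.card_bij' (fun B _ => B \ D) (fun C _ => C ∪ D)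
    · intro B hB
      simp only [Finset.mem_filter, Finset.mem_powersetCard] at hB
      obtain ⟨⟨hBU, hBc⟩, hDB⟩ := hB
      rw [Finset.mem_powersetCard]
      exact ⟨Finset.sdiff_subset_sdiff hBU Finset.Subset.rfl,
        by rw [Finset.card_sdiff_of_subset hDB, hBc]⟩
    · intro C hC
      rw [Finset.mem_powersetCard] at hC
      obtain ⟨hCU, hCc⟩ := hC
      have hCD : Disjoint C D := by
        rw [Finset.disjoint_right]
        intro x hxD hxC
        exact (Finset.mem_sdiff.mp (hCU hxC)).2 hxD
      simp only [Finset.mem_filter, Finset.mem_powersetCard]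
      refine ⟨⟨Finset.union_subset (hCU.trans Finset.sdiff_subset) hD, ?_⟩,
        Finset.subset_union_right⟩
      rw [Finset.card_union_of_disjoint hCD, hCc]
      omega
    · intro B hB
      simp only [Finset.mem_filter, Finset.mem_powersetCard] at hB
      rw [Finset.sdiff_union_of_subset hB.2]
    · intro C hC
      rw [Finset.mem_powersetCard] at hC
      have hCD : Disjoint C D := by
        rw [Finset.disjoint_right]
        intro x hxD hxC
        exact (Finset.mem_sdiff.mp (hC.1 hxC)).2 hxD
      rw [Finset.union_sdiff_right, Finset.sdiff_eq_self_of_disjoint hCD]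
  rw [key, Finset.card_powersetCard, Finset.card_sdiff_of_subset hD]
/-- The finset of pairs encoding `FiBar \ Fi`. -/
noncomputable def pairSet (n a b : ℕ) : Finset (Finset ℕ × Finset ℕ) :=
  (((Iv n).powersetCard b).filter
      (fun B => insert n (Iv (2 * b - n + 1)) ⊆ B)).biUnion
    (fun B => ((B \ Iv (2 * b - n + 1)).powersetCard a).image (fun A => (A, B)))

lemma pairSet_card {n a b : ℕ} (ha : 0 < a) (hb : 0 < b) (hab : a + b < n)
    (hbn : n < 2 * b) :
    (pairSet n a b).card =
      (n - (2 * b - n + 1) - 1).choose (b - (2 * b - n + 1) - 1) *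
        (b - (2 * b - n + 1)).choose a := by
  set i := 2 * b - n + 1 with hi
  have hin : i < n := by omega
  have hib : i < b := by omega
  have hnIv : n ∉ Iv i := by rw [mem_Iv]; omega
  have hDcard : (insert n (Iv i)).card = i + 1 := by
    rw [Finset.card_insert_of_notMem hnIv, Iv_card]
  have hDU : insert n (Iv i) ⊆ Iv n := by
    intro x hx
    rcases Finset.mem_insert.mp hx with rfl | hx
    · rw [mem_Iv]; omega
    · exact Iv_subset_Iv (by omega) hx
  rw [pairSet, Finset.card_biUnion]
  · have hsum : ∀ B ∈ ((Iv n).powersetCard b).filter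
        (fun B => insert n (Iv i) ⊆ B),
        (((B \ Iv i).powersetCard a).image (fun A => (A, B))).card =
          (b - i).choose a := by
      intro B hB
      simp only [Finset.mem_filter, Finset.mem_powersetCard] at hB
      obtain ⟨⟨hBU, hBc⟩, hDB⟩ := hB
      have hIvB : Iv i ⊆ B := (Finset.subset_insert _ _).trans hDB
      rw [Finset.card_image_of_injective _ (fun x y h => (Prod.mk.injEq _ _ _ _).mp h |>.1),
        Finset.card_powersetCard, Finset.card_sdiff_of_subset hIvB, hBc, Iv_card]
    rw [Finset.sum_congr rfl hsum, Finset.sum_const, smul_eq_mul,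
      card_filter_superset hDU (by omega), Iv_card, hDcard]
    congr 2 <;> omega
  · intro B₁ h₁ B₂ h₂ hne
    rw [Function.onFun, Finset.disjoint_left]
    intro p hp1 hp2
    simp only [Finset.mem_image] at hp1 hp2
    obtain ⟨A₁, _, rfl⟩ := hp1
    obtain ⟨A₂, _, he⟩ := hp2
    exact hne ((Prod.mk.injEq _ _ _ _).mp he |>.2).symm
lemma diff_ncard {n a b : ℕ} (ha : 0 < a) (hb : 0 < b) (hab : a + b < n)
    (hbn : n < 2 * b) :
    (FiBar n a b \ Fi n a b (2 * b - n + 1)).ncard = (pairSet n a b).card := by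
  have hab' : a < b := by omega
  have hbln : b < n := by omega
  set i := 2 * b - n + 1 with hi
  set g : FlagV n {a, b} → Finset ℕ × Finset ℕ := fun v => (elC a v.1, elC b v.1)
    with hg
  have hgval : ∀ (v : FlagV n {a, b}) (A B : Finset ℕ), v.1 = {A, B} →
      A.card = a → B.card = b → g v = (A, B) := by
    intro v A B hveq hAc hBc
    rw [hg]
    simp only [hveq]
    rw [elC_eq_A hAc hBc (by omega), elC_eq_B hAc hBc (by omega)]
  have himg : g '' (FiBar n a b \ Fi n a b i) = ↑(pairSet n a b) := by
    ext p
    constructor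
    · rintro ⟨v, hv, rfl⟩
      obtain ⟨A, B, hveq, hAB, hAc, hBc, hBn, hBne, hAne⟩ := flag_pair hab' v
      rw [mem_diff_iff ha hb hab hbn hveq hAB hAc hBc hBn hAne] at hv
      obtain ⟨hIvB, hnB, hAgt⟩ := hv
      rw [hgval v A B hveq hAc hBc]
      simp only [Finset.coe_biUnion, Set.mem_iUnion, Finset.mem_coe, pairSet]
      refine ⟨B, ?_, ?_⟩
      · simp only [Finset.mem_filter, Finset.mem_powersetCard]
        exact ⟨⟨hBn, hBc⟩, Finset.insert_subset hnB hIvB⟩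
      · rw [Finset.mem_image]
        refine ⟨A, ?_, rfl⟩
        rw [Finset.mem_powersetCard]
        refine ⟨?_, hAc⟩
        intro x hx
        rw [Finset.mem_sdiff]
        exact ⟨hAB hx, by rw [mem_Iv]; have := hAgt x hx; omega⟩
    · intro hp
      simp only [Finset.mem_coe, pairSet, Finset.mem_biUnion, Finset.mem_filter,
        Finset.mem_powersetCard, Finset.mem_image] at hp
      obtain ⟨B, ⟨⟨hBn, hBc⟩, hDB⟩, A, ⟨hABi, hAc⟩, rfl⟩ := hp
      have hAB : A ⊆ B := hABi.trans Finset.sdiff_subset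
      have hAne : A.Nonempty := Finset.card_pos.mp (by omega)
      obtain ⟨hwflag, hwtype⟩ := mk_flag ha hab' hbln hAB hBn hAc hBc
      refine ⟨(⟨{A, B}, hwflag, hwtype⟩ : FlagV n {a, b}), ?_, hgval _ A B rfl hAc hBc⟩
      apply (mem_diff_iff ha hb hab hbn (v := ⟨{A, B}, hwflag, hwtype⟩) rfl hAB hAc hBc hBn hAne).mpr
      refine ⟨(Finset.subset_insert _ _).trans hDB,
        hDB (Finset.mem_insert_self _ _), ?_⟩
      intro x hx
      have h1 := (Finset.mem_sdiff.mp (hABi hx)).2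
      have h2 := mem_Iv.mp (hBn (hAB hx))
      rw [mem_Iv] at h1
      omega
  have hinj : Set.InjOn g (FiBar n a b \ Fi n a b i) := by
    intro v hv w hw he
    obtain ⟨A, B, hveq, _, hAc, hBc, _, _, _⟩ := flag_pair hab' v
    obtain ⟨A', B', hweq, _, hA'c, hB'c, _, _, _⟩ := flag_pair hab' w
    rw [hgval v A B hveq hAc hBc, hgval w A' B' hweq hA'c hB'c,
      Prod.mk.injEq] at he
    apply Subtype.ext
    rw [hveq, hweq, he.1, he.2]
  rw [← Set.ncard_image_of_injOn hinj, himg, Set.ncard_coe_finset]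
/-- for positive `n, a, b` with `a + b < n` and `b > n/2`, and
`i = 2b - n + 1`, the set `bar F_i(n,a,b)` is a maximal independent set of
`Γ(n,{a,b})`, it is the unique maximal independent set containing `F_i(n,a,b)`, and
`|bar F_i ∖ F_i| = C(n-i-1, b-i-1) · C(b-i, a)`. -/
theorem FiBar_maximal_indep (n a b : ℕ) (ha : 0 < a) (hb : 0 < b)
    (hab : a + b < n) (hbn : n < 2 * b) :
    IsMaxIndep (flagGraph n {a, b}) (FiBar n a b) ∧
    Fi n a b (2 * b - n + 1) ⊆ FiBar n a b ∧
    (∀ s : Set (FlagV n {a, b}), IsMaxIndep (flagGraph n {a, b}) s →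
      Fi n a b (2 * b - n + 1) ⊆ s → s = FiBar n a b) ∧
    (FiBar n a b \ Fi n a b (2 * b - n + 1)).ncard =
      Nat.choose (n - (2 * b - n + 1) - 1) (b - (2 * b - n + 1) - 1) *
        Nat.choose (b - (2 * b - n + 1)) a := by
  have hsub : Fi n a b (2 * b - n + 1) ⊆ FiBar n a b := by
    rintro v ⟨A, B, hA, hB, hAc, hBc, h⟩
    refine ⟨A, B, hA, hB, hAc, hBc, ?_⟩
    rcases h with h | h
    · exact Or.inl h.1
    · exact Or.inr h
  have hindep := FiBar_indep ha hb hab hbn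
  have hmax : ∀ v ∉ FiBar n a b,
      ¬ IsIndep (flagGraph n {a, b}) (insert v (FiBar n a b)) := by
    intro v hv hind
    obtain ⟨w, hwFi, hadj⟩ := exists_adj_Fi ha hb hab hbn hv
    exact hind (Set.mem_insert v _) (Set.mem_insert_of_mem _ (hsub hwFi)) hadj
  refine ⟨⟨hindep, hmax⟩, hsub, ?_, ?_⟩
  · intro s hs hFis
    have h1 : s ⊆ FiBar n a b := by
      intro v hvs
      by_contra hv
      obtain ⟨w, hwFi, hadj⟩ := exists_adj_Fi ha hb hab hbn hv
      exact hs.1 hvs (hFis hwFi) hadj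
    have h2 : FiBar n a b ⊆ s := by
      intro v hv
      by_contra hvs
      apply hs.2 v hvs
      intro u hu w hw
      have hu' : u ∈ FiBar n a b := by
        rcases hu with rfl | hu
        · exact hv
        · exact h1 hu
      have hw' : w ∈ FiBar n a b := by
        rcases hw with rfl | hw
        · exact hv
        · exact h1 hw
      exact hindep hu' hw'
    exact Set.Subset.antisymm h1 h2
  · rw [diff_ncard ha hb hab hbn]
    exact pairSet_card ha hb hab hbn
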